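/- Let f : GF(p)^{2m} → GF(p) be a feasible Latin or negative Latin square type function with dual f*. Then for each 1 ≤ i ≤ p, the i-th component indicator f*_i of f* satisfies f*_i(x) = (1/N)·f̂_i(x) + r_i/N − r_i·δ_0(x) for all x, where δ_0 is the indicator of {0}. -/

import Mathlib

open Finset BigOperators

noncomputable def zeta (p : ℕ) : ℂ := Complex.exp (2 * Real.pi * Complex.I / p)

def ip {p n : ℕ} (x y : Fin n → ZMod p) : ZMod p := ∑ i, x i * y i

noncomputable def walsh {p n : ℕ} [NeZero p]
    (f : (Fin n → ZMod p) → ZMod p) (x : Fin n → ZMod p) : ℂ :=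
  ∑ y, zeta p ^ (f y - ip x y).val

/-- The component Cayley graph `Γ_i` of `f` on `GF(p)^n`: distinct vertices `x, y` are
adjacent iff `x - y` lies in the connection set `D_i = {z ≠ 0 | f z = i}` (for an even `f`
the symmetrization in `fromRel` is harmless).  For `i ≠ 0` this set is `f⁻¹(i)`, and for
`i = 0` it is `f⁻¹(0) \ {0}`; i.e. `i = 0` plays the role of the index `p`. -/
def cayleyGraph {p n : ℕ} (f : (Fin n → ZMod p) → ZMod p) (i : ZMod p) :
    SimpleGraph (Fin n → ZMod p) :=
  SimpleGraph.fromRel (fun x y => f (x - y) = i)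
/-- The generalized Hadamard vector entry `h(x)_y = ζ^{-⟨x,y⟩}`. -/
noncomputable def hvec {p n : ℕ} [NeZero p] (x y : Fin n → ZMod p) : ℂ :=
  zeta p ^ (-(ip x y)).val

/-- The Fourier transform `f̂_i(x)` of the indicator function of
`D_i = {y ≠ 0 | f y = i}`. -/
noncomputable def fourierInd {p n : ℕ} [NeZero p]
    (f : (Fin n → ZMod p) → ZMod p) (i : ZMod p) (x : Fin n → ZMod p) : ℂ :=
  ∑ y, (if f y = i ∧ y ≠ 0 then (1:ℂ) else 0) * hvec x y

/-!
For `x ≠ 0`, strong regularity of the Cayley graph of `D_i` gives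
`f̂_i(x)² = (k - μ) + (λ - μ) f̂_i(x)`, and with the Latin square type parameters this forces
`f̂_i(x) ∈ {N - r_i, -r_i}`, i.e. `c_i := (f̂_i(x) + r_i) / N ∈ {0, 1}`. Summing over `i` gives
`∑ c_i = 1`, so exactly one `c_i` equals `1`; expanding the Walsh transform along the level sets
of `f` gives `∑ ζ^i c_i = W_f(x) / N = ζ^{f*(x)}`, which identifies that index as `f*(x)`.
At `x = 0` both sides vanish because `f̂_i(0) = |D_i| = (N - 1) r_i`.
-/

lemma ip_add_right {p n : ℕ} (x y z : Fin n → ZMod p) : ip x (y + z) = ip x y + ip x z :=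
  dotProduct_add x y z

section Characters

variable {p n : ℕ} [NeZero p]

lemma zeta_pow_val (a : ZMod p) : zeta p ^ a.val = ZMod.stdAddChar a := by
  rw [ZMod.stdAddChar_apply, ZMod.toCircle_apply, zeta, ← Complex.exp_nat_mul]
  ring_nf

lemma hvec_eq_stdAddChar (x y : Fin n → ZMod p) : hvec x y = ZMod.stdAddChar (-ip x y) :=
  zeta_pow_val _

noncomputable def hvecChar (x : Fin n → ZMod p) : AddChar (Fin n → ZMod p) ℂ where
  toFun := hvec x
  map_zero_eq_one' := by simp [hvec_eq_stdAddChar, ip]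
  map_add_eq_mul' y z := by
    simp only [hvec_eq_stdAddChar, ip_add_right, neg_add, AddChar.map_add_eq_mul]

@[simp] lemma hvecChar_apply (x y : Fin n → ZMod p) : hvecChar x y = hvec x y := rfl

lemma hvecChar_ne_one {x : Fin n → ZMod p} (hx : x ≠ 0) : hvecChar x ≠ 1 := by
  obtain ⟨j, hj⟩ := Function.ne_iff.mp hx
  refine AddChar.ne_one_iff.mpr ⟨Pi.single j 1, ?_⟩
  rw [hvecChar_apply, hvec_eq_stdAddChar, ← (ZMod.stdAddChar (N := p)).map_zero_eq_one,
    ZMod.injective_stdAddChar.ne_iff]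
  simpa [ip, Pi.single_apply] using hj

lemma hvec_zero_right (x : Fin n → ZMod p) : hvec x 0 = 1 :=
  (hvecChar x).map_zero_eq_one

lemma hvec_zero_left (y : Fin n → ZMod p) : hvec 0 y = 1 := by
  simp [hvec_eq_stdAddChar, ip]

lemma sum_hvec_erase_zero {x : Fin n → ZMod p} (hx : x ≠ 0) :
    ∑ y ∈ univ.erase 0, hvec x y = -1 := by
  have h := AddChar.sum_eq_zero_of_ne_one (hvecChar_ne_one hx)
  rw [← Finset.add_sum_erase _ _ (mem_univ 0)] at h
  simpa [hvec_zero_right, add_eq_zero_iff_eq_neg'] using h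

end Characters

lemma AddChar.sq_sum_eq_sum_card_filter {G R : Type*} [AddCommGroup G] [Fintype G]
    [DecidableEq G] [CommSemiring R] (ψ : AddChar G R) (D : Finset G) :
    (∑ y ∈ D, ψ y) ^ 2 = ∑ w, (#{y ∈ D | w - y ∈ D} : R) * ψ w := by
  have shift : ∀ y, ∑ z ∈ D, ψ (y + z) = ∑ w, if w - y ∈ D then ψ w else 0 := fun y => by
    rw [← Finset.sum_filter]
    exact Finset.sum_nbij' (y + ·) (· - y) (by simp) (by simp) (by simp) (by simp) (by simp)
  simp_rw [sq, Finset.sum_mul_sum, ← AddChar.map_add_eq_mul, shift, Finset.card_filter]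
  rw [Finset.sum_comm]
  push_cast
  simp_rw [Finset.sum_mul, ite_mul, one_mul, zero_mul]

section Cayley

variable {p n : ℕ} [NeZero p] (f : (Fin n → ZMod p) → ZMod p) (i : ZMod p)

def connectionSet : Finset (Fin n → ZMod p) := {y | f y = i ∧ y ≠ 0}

variable {f i}

lemma mem_connectionSet {y : Fin n → ZMod p} : y ∈ connectionSet f i ↔ f y = i ∧ y ≠ 0 := by
  simp [connectionSet]

lemma fourierInd_eq_sum_connectionSet (x : Fin n → ZMod p) :
    fourierInd f i x = ∑ y ∈ connectionSet f i, hvec x y := by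
  simp [fourierInd, connectionSet, Finset.sum_filter]

lemma fourierInd_zero : fourierInd f i 0 = #(connectionSet f i) := by
  simp [fourierInd_eq_sum_connectionSet, hvec_zero_left]

lemma sum_mul_fourierInd (g : ZMod p → ℂ) (x : Fin n → ZMod p) :
    ∑ j, g j * fourierInd f j x = ∑ y ∈ univ.erase 0, g (f y) * hvec x y := by
  simp_rw [fourierInd, Finset.mul_sum]
  rw [Finset.sum_comm, ← Finset.filter_ne' univ 0, Finset.sum_filter]
  refine Finset.sum_congr rfl fun y _ => ?_
  by_cases hy : y = 0 <;> simp [hy]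

lemma sum_fourierInd {x : Fin n → ZMod p} (hx : x ≠ 0) : ∑ j, fourierInd f j x = -1 := by
  simpa [sum_hvec_erase_zero hx] using sum_mul_fourierInd (f := f) (fun _ => 1) x

lemma walsh_eq_one_add_sum (h0 : f 0 = 0) (x : Fin n → ZMod p) :
    walsh f x = 1 + ∑ j, ZMod.stdAddChar j * fourierInd f j x := by
  have term : ∀ y, zeta p ^ (f y - ip x y).val = ZMod.stdAddChar (f y) * hvec x y := fun y => by
    rw [zeta_pow_val, sub_eq_add_neg, AddChar.map_add_eq_mul, hvec_eq_stdAddChar]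
  rw [walsh, Finset.sum_congr rfl fun y _ => term y, ← Finset.add_sum_erase _ _ (mem_univ 0),
    h0, hvec_zero_right, AddChar.map_zero_eq_one, one_mul, sum_mul_fourierInd]

lemma neg_mem_connectionSet (heven : ∀ x, f (-x) = f x) {y : Fin n → ZMod p} :
    -y ∈ connectionSet f i ↔ y ∈ connectionSet f i := by
  simp [mem_connectionSet, heven]

lemma cayleyGraph_adj (heven : ∀ x, f (-x) = f x) {a b : Fin n → ZMod p} :
    (cayleyGraph f i).Adj a b ↔ a - b ∈ connectionSet f i := by
  rw [cayleyGraph, SimpleGraph.fromRel_adj, mem_connectionSet, ← heven (a - b), neg_sub,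
    sub_ne_zero]
  tauto

open scoped Classical in
lemma card_connectionSet (heven : ∀ x, f (-x) = f x) {k : ℕ}
    (hreg : (cayleyGraph f i).IsRegularOfDegree k) : #(connectionSet f i) = k := by
  have : (cayleyGraph f i).neighborFinset 0 = connectionSet f i := by
    ext u
    rw [SimpleGraph.mem_neighborFinset, cayleyGraph_adj heven, zero_sub,
      neg_mem_connectionSet heven]
  rw [← this, SimpleGraph.card_neighborFinset_eq_degree, hreg 0]

open scoped Classical in
lemma card_commonNeighbors_zero (heven : ∀ x, f (-x) = f x) (w : Fin n → ZMod p) :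
    Fintype.card ((cayleyGraph f i).commonNeighbors 0 w) =
      #{y ∈ connectionSet f i | w - y ∈ connectionSet f i} := by
  rw [← Set.toFinset_card]
  congr 1
  ext u
  simp [SimpleGraph.mem_commonNeighbors, cayleyGraph_adj heven, zero_sub,
    neg_mem_connectionSet heven]

open scoped Classical in
lemma card_filter_sub_mem_connectionSet (heven : ∀ x, f (-x) = f x) {v k l μ : ℕ}
    (hsrg : (cayleyGraph f i).IsSRGWith v k l μ) (w : Fin n → ZMod p) :
    #{y ∈ connectionSet f i | w - y ∈ connectionSet f i} =
      if w = 0 then k else if w ∈ connectionSet f i then l else μ := by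
  split_ifs with hw hD
  · subst hw
    rw [Finset.filter_true_of_mem fun y hy => by rwa [zero_sub, neg_mem_connectionSet heven],
      card_connectionSet heven hsrg.regular]
  all_goals
    rw [← card_commonNeighbors_zero heven]
    have hadj : (cayleyGraph f i).Adj 0 w ↔ w ∈ connectionSet f i := by
      rw [cayleyGraph_adj heven, zero_sub, neg_mem_connectionSet heven]
  · exact hsrg.of_adj 0 w (hadj.mpr hD)
  · exact hsrg.of_not_adj (Ne.symm hw) (hadj.not.mpr hD)

end Cayley

section Spectrum

variable {p n : ℕ} [NeZero p] {f : (Fin n → ZMod p) → ZMod p} {i : ZMod p}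

open scoped Classical in
lemma fourierInd_sq (heven : ∀ x, f (-x) = f x) {v k l μ : ℕ}
    (hsrg : (cayleyGraph f i).IsSRGWith v k l μ) {x : Fin n → ZMod p} (hx : x ≠ 0) :
    fourierInd f i x ^ 2 = k - μ + (l - μ) * fourierInd f i x := by
  have hcard : ∀ w, (#{y ∈ connectionSet f i | w - y ∈ connectionSet f i} : ℂ) =
      μ + (if w = 0 then (k - μ : ℂ) else 0) +
        (if w ∈ connectionSet f i then (l - μ : ℂ) else 0) := by
    intro w
    rw [card_filter_sub_mem_connectionSet heven hsrg w]
    split_ifs with hw hD hD <;> simp_all [mem_connectionSet]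
  have hsum := AddChar.sum_eq_zero_of_ne_one (hvecChar_ne_one hx)
  rw [fourierInd_eq_sum_connectionSet]
  change (∑ y ∈ connectionSet f i, hvecChar x y) ^ 2 = _
  simp_rw [AddChar.sq_sum_eq_sum_card_filter, hcard, add_mul, Finset.sum_add_distrib,
    ← Finset.mul_sum, hsum, ite_mul, zero_mul, Finset.sum_ite_eq', ← Finset.sum_filter]
  simp [← Finset.mul_sum]

open scoped Classical in
lemma fourierInd_eq_sub_or_eq_neg (heven : ∀ x, f (-x) = f x) {N r : ℤ} {v k l μ : ℕ}
    (hk : (k : ℤ) = (N - 1) * r) (hl : (l : ℤ) = N + r ^ 2 - 3 * r) (hμ : (μ : ℤ) = r ^ 2 - r)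
    (hsrg : (cayleyGraph f i).IsSRGWith v k l μ) {x : Fin n → ZMod p} (hx : x ≠ 0) :
    fourierInd f i x = N - r ∨ fourierInd f i x = -r := by
  have hq := fourierInd_sq heven hsrg hx
  have hk' : (k : ℂ) = (N - 1) * r := by exact_mod_cast hk
  have hl' : (l : ℂ) = N + r ^ 2 - 3 * r := by exact_mod_cast hl
  have hμ' : (μ : ℂ) = r ^ 2 - r := by exact_mod_cast hμ
  have hfactor : (fourierInd f i x - (N - r)) * (fourierInd f i x + r) = 0 := by
    rw [hk', hl', hμ'] at hq
    linear_combination hq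
  rcases mul_eq_zero.mp hfactor with h | h
  · exact Or.inl (sub_eq_zero.mp h)
  · exact Or.inr (eq_neg_of_add_eq_zero_left h)

end Spectrum

lemma eq_ite_of_zero_or_one_of_sum_eq {ι R : Type*} [Fintype ι] [DecidableEq ι] [Semiring R]
    [CharZero R] {c ψ : ι → R} (hψ : Function.Injective ψ) (hc : ∀ i, c i = 0 ∨ c i = 1)
    (hsum : ∑ i, c i = 1) {j : ι} (hψsum : ∑ i, ψ i * c i = ψ j) (i : ι) :
    c i = if j = i then 1 else 0 := by
  classical
  have hcard : #{i | c i = 1} = 1 := by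
    have : ∑ i, c i = #{i | c i = 1} := by
      rw [Finset.natCast_card_filter]
      exact Finset.sum_congr rfl fun i _ => by rcases hc i with h | h <;> simp [h]
    exact_mod_cast this.symm.trans hsum
  obtain ⟨i₀, hi₀⟩ := Finset.card_eq_one.mp hcard
  have hc_eq : ∀ i, c i = if i₀ = i then 1 else 0 := fun i => by
    have hmem : c i = 1 ↔ i = i₀ := by
      simpa only [mem_singleton, mem_filter, mem_univ, true_and] using Finset.ext_iff.mp hi₀ i
    rcases hc i with h | h
    · rw [h, if_neg fun e => zero_ne_one (h.symm.trans (hmem.mpr e.symm))]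
    · rw [h, if_pos (hmem.mp h).symm]
  obtain rfl : i₀ = j := hψ (by simpa [hc_eq] using hψsum)
  exact hc_eq i

section Parameters

variable {p : ℕ} {R : ZMod p → ℤ} {q : ℤ}

lemma cast_eq_add_ite (hR : ∀ i, R i = if i = 0 then q + 1 else q) (i : ZMod p) :
    (R i : ℂ) = q + if i = 0 then 1 else 0 := by
  rw [hR]
  split_ifs <;> push_cast <;> ring

lemma sum_cast_eq_of_eq_ite [NeZero p] (hR : ∀ i, R i = if i = 0 then q + 1 else q) :
    ∑ i, (R i : ℂ) = p * q + 1 := by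
  simp [cast_eq_add_ite hR, Finset.sum_add_distrib]

lemma sum_stdAddChar_mul_eq_one [NeZero p] [Fact (1 < p)]
    (hR : ∀ i, R i = if i = 0 then q + 1 else q) :
    ∑ i, ZMod.stdAddChar i * (R i : ℂ) = 1 := by
  have hψ : ZMod.stdAddChar (N := p) ≠ 1 := AddChar.ne_one_iff.mpr ⟨1, by
    rw [← (ZMod.stdAddChar (N := p)).map_zero_eq_one, ZMod.injective_stdAddChar.ne_iff]
    exact one_ne_zero⟩
  simp_rw [cast_eq_add_ite hR, mul_add, Finset.sum_add_distrib, ← Finset.sum_mul,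
    AddChar.sum_eq_zero_of_ne_one hψ]
  simp

end Parameters

open scoped Classical in
theorem stmt14_general (p m : ℕ) [Fact p.Prime] (hm : 1 ≤ m)
    (f : (Fin (2 * m) → ZMod p) → ZMod p)
    (heven : ∀ x, f (-x) = f x) (h0 : f 0 = 0)
    (N : ℤ) (hN : N = (p : ℤ) ^ m ∨ N = -((p : ℤ) ^ m))
    (R : ZMod p → ℤ)
    (hR : ∀ i : ZMod p, R i = if i = 0 then N / p + 1 else N / p)
    (hSRG : ∀ i : ZMod p, ∃ k l mu : ℕ,
      (k : ℤ) = (N - 1) * R i ∧ (l : ℤ) = N + R i ^ 2 - 3 * R i ∧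
      (mu : ℤ) = R i ^ 2 - R i ∧
      (cayleyGraph f i).IsSRGWith (p ^ (2 * m)) k l mu)
    (fstar : (Fin (2 * m) → ZMod p) → ZMod p)
    (hdual : ∀ x, walsh f x = zeta p ^ (fstar x).val * (N : ℂ)) :
    ∀ (i : ZMod p) (x : Fin (2 * m) → ZMod p),
      (if fstar x = i ∧ x ≠ 0 then (1 : ℂ) else 0) =
        (1 / (N : ℂ)) * fourierInd f i x + (R i : ℂ) / (N : ℂ) -
          (R i : ℂ) * (if x = 0 then 1 else 0) := by
  intro i x
  have hpN : (p : ℂ) * (N / p : ℤ) = N := by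
    have hdvd : (p : ℤ) ∣ N := by
      rcases hN with rfl | rfl <;> simp [dvd_pow_self _ (by omega : m ≠ 0)]
    exact_mod_cast Int.mul_ediv_cancel' hdvd
  have hN0 : (N : ℂ) ≠ 0 := by
    rcases hN with rfl | rfl <;> simp [(Fact.out : p.Prime).ne_zero]
  rcases eq_or_ne x 0 with rfl | hx
  · obtain ⟨k, _, _, hk, -, -, hsrg⟩ := hSRG i
    have hk' : (k : ℂ) = (N - 1) * R i := by exact_mod_cast hk
    rw [fourierInd_zero, card_connectionSet heven hsrg.regular, hk']
    field_simp
    simp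
  set c : ZMod p → ℂ := fun j => (fourierInd f j x + R j) / N
  have hc : ∀ j, c j = 0 ∨ c j = 1 := fun j => by
    obtain ⟨k, l, μ, hk, hl, hμ, hsrg⟩ := hSRG j
    rcases fourierInd_eq_sub_or_eq_neg heven hk hl hμ hsrg hx with h | h <;> simp [c, h, hN0]
  have hsum : ∑ j, c j = 1 := by
    simp [c, ← Finset.sum_div, Finset.sum_add_distrib, sum_fourierInd hx,
      sum_cast_eq_of_eq_ite hR, hpN, hN0]
  have hchar : ∑ j, ZMod.stdAddChar j * c j = ZMod.stdAddChar (fstar x) := by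
    have hW := walsh_eq_one_add_sum h0 x
    rw [hdual, zeta_pow_val] at hW
    simp only [c, mul_div_assoc', mul_add, ← Finset.sum_div, Finset.sum_add_distrib,
      sum_stdAddChar_mul_eq_one hR]
    rw [div_eq_iff hN0, add_comm, ← hW]
  have := eq_ite_of_zero_or_one_of_sum_eq ZMod.injective_stdAddChar hc hsum hchar i
  simp only [hx, ne_eq, not_false_eq_true, and_true, if_false, mul_zero, sub_zero, ← this, c]
  ring

open scoped Classical in
/-- Let `f : GF(p)^{2m} → GF(p)` be a feasible Latin or negative Latin
square type function with dual `f*` (so `W_f(x) = ζ^{f*(x)} N` for all `x`, `f*(0) = 0`).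
Then for each `1 ≤ i ≤ p`, the `i`-th component indicator `f*_i` of `f*` satisfies
`f*_i(x) = (1/N)·f̂_i(x) + r_i/N − r_i·δ_0(x)` for all `x`. -/
theorem stmt14 (p m : ℕ) [Fact p.Prime] (hodd : p ≠ 2) (hm : 1 ≤ m)
    (f : (Fin (2 * m) → ZMod p) → ZMod p)
    (heven : ∀ x, f (-x) = f x) (h0 : f 0 = 0)
    (N : ℤ) (hN : N = (p : ℤ) ^ m ∨ N = -((p : ℤ) ^ m))
    (R : ZMod p → ℤ)
    (hR : ∀ i : ZMod p, R i = if i = 0 then N / p + 1 else N / p)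
    (hSRG : ∀ i : ZMod p, ∃ k l mu : ℕ,
      (k : ℤ) = (N - 1) * R i ∧ (l : ℤ) = N + R i ^ 2 - 3 * R i ∧
      (mu : ℤ) = R i ^ 2 - R i ∧
      (cayleyGraph f i).IsSRGWith (p ^ (2 * m)) k l mu)
    (fstar : (Fin (2 * m) → ZMod p) → ZMod p) (hstar0 : fstar 0 = 0)
    (hdual : ∀ x, walsh f x = zeta p ^ (fstar x).val * (N : ℂ)) :
    ∀ (i : ZMod p) (x : Fin (2 * m) → ZMod p),
      (if fstar x = i ∧ x ≠ 0 then (1 : ℂ) else 0) =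
        (1 / (N : ℂ)) * fourierInd f i x + (R i : ℂ) / (N : ℂ) -
          (R i : ℂ) * (if x = 0 then 1 else 0) :=
  stmt14_general p m hm f heven h0 N hN R hR hSRG fstar hdual
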